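/- Let A be a Banach algebra over ℂ and τ : A → ℂ a continuous ℂ-linear functional with τ(xy) = τ(yx) for all x, y ∈ A. Let α : ℝ → A have derivative α' at s₀ (in the sense of HasDerivAt), and let β, γ ∈ A commute with α(s₀). Then for every polynomial f ∈ ℂ[X], the function s ↦ τ( β · f(α(s)) · γ ) is differentiable at s₀ with derivative τ( β · α' · f'(α(s₀)) · γ ), where f(α(s)) denotes polynomial evaluation and f' the formal derivative of f. -/

import Mathlib

/-!
Inside `τ (β * _ * γ)`, with `β` and `γ` commuting with `a = α s₀`, cyclicity of `τ` moves any
power of `a` from the left of a factor to its right. Hence each of the `n` terms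
`a ^ (n - 1 - i) * α' * a ^ i` of the noncommutative derivative of `α ^ n` contributes
`τ (β * α' * a ^ (n - 1) * γ)`, exactly as in the commutative formula `(X ^ n)' = n X ^ (n - 1)`;
linearity in `f` does the rest.
-/

open Polynomial Finset

section Cyclic

variable {M B : Type*} [Monoid M] {τ : M → B}

theorem trace_sandwich_mul_comm (htr : ∀ x y, τ (x * y) = τ (y * x)) {β γ c : M}
    (hβ : Commute β c) (hγ : Commute γ c) (x : M) :
    τ (β * (c * x) * γ) = τ (β * (x * c) * γ) := calc
  τ (β * (c * x) * γ) = τ (c * (β * x * γ)) := by rw [← mul_assoc, hβ.eq]; simp only [mul_assoc]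
  _ = τ (β * x * γ * c) := htr _ _
  _ = τ (β * (x * c) * γ) := by rw [mul_assoc _ γ, hγ.eq]; simp only [mul_assoc]

theorem trace_sandwich_pow_mul_mul_pow (htr : ∀ x y, τ (x * y) = τ (y * x)) {β γ a : M}
    (hβ : Commute β a) (hγ : Commute γ a) (x : M) (i j : ℕ) :
    τ (β * (a ^ i * x * a ^ j) * γ) = τ (β * (x * a ^ (i + j)) * γ) := by
  rw [mul_assoc (a ^ i) x, trace_sandwich_mul_comm htr (hβ.pow_right i) (hγ.pow_right i),
    mul_assoc x, ← pow_add, add_comm j]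

end Cyclic

theorem trace_sandwich_sum_pow_mul_mul_pow {R B F : Type*} [Semiring R] [AddCommMonoid B]
    [FunLike F R B] [AddMonoidHomClass F R B] {τ : F} (htr : ∀ x y, τ (x * y) = τ (y * x))
    {β γ a : R} (hβ : Commute β a) (hγ : Commute γ a) (x : R) (n : ℕ) :
    τ (β * (∑ i ∈ range n, a ^ (n - 1 - i) * x * a ^ i) * γ) =
      n • τ (β * x * a ^ (n - 1) * γ) := by
  rw [mul_sum, sum_mul, map_sum, ← card_range n, ← sum_const, card_range]
  refine sum_congr rfl fun i hi => ?_
  rw [trace_sandwich_pow_mul_mul_pow htr hβ hγ, ← mul_assoc,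
    Nat.sub_add_cancel (Nat.le_sub_one_of_lt (mem_range.1 hi))]

section Deriv

variable {𝕜 A E : Type*} [NontriviallyNormedField 𝕜] [NormedRing A] [NormedAlgebra 𝕜 A]
  [NormedAddCommGroup E] [NormedSpace 𝕜 E] (τ : A →L[𝕜] E)

theorem HasDerivAt.trace_sandwich {u : 𝕜 → A} {u' : A} {s₀ : 𝕜} (hu : HasDerivAt u u' s₀)
    (β γ : A) : HasDerivAt (fun s => τ (β * u s * γ)) (τ (β * u' * γ)) s₀ :=
  τ.hasFDerivAt.comp_hasDerivAt s₀ ((hu.const_mul β).mul_const γ)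

theorem HasDerivAt.trace_sandwich_pow (htr : ∀ x y : A, τ (x * y) = τ (y * x)) {α : 𝕜 → A}
    {α' : A} {s₀ : 𝕜} (hα : HasDerivAt α α' s₀) {β γ : A} (hβ : Commute β (α s₀))
    (hγ : Commute γ (α s₀)) (n : ℕ) :
    HasDerivAt (fun s => τ (β * α s ^ n * γ)) (n • τ (β * α' * α s₀ ^ (n - 1) * γ)) s₀ := by
  rw [← trace_sandwich_sum_pow_mul_mul_pow htr hβ hγ]
  exact (hα.fun_pow' n).trace_sandwich τ β γ

end Deriv

theorem hasDerivAt_tracial_poly_general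
    {A : Type*} [NormedRing A] [NormedAlgebra ℂ A]
    (τ : A →L[ℂ] ℂ) (htr : ∀ x y : A, τ (x * y) = τ (y * x))
    (α : ℝ → A) (α' : A) (s₀ : ℝ) (hα : HasDerivAt α α' s₀)
    (β γ : A) (hβ : Commute β (α s₀)) (hγ : Commute γ (α s₀))
    (f : Polynomial ℂ) :
    HasDerivAt (fun s => τ (β * Polynomial.aeval (α s) f * γ))
      (τ (β * α' * Polynomial.aeval (α s₀) (Polynomial.derivative f) * γ)) s₀ := by
  induction f using Polynomial.induction_on' with
  | add p q hp hq => simpa only [map_add, mul_add, add_mul] using hp.fun_add hq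
  | monomial n c =>
    have hpow := (hα.trace_sandwich_pow (τ.restrictScalars ℝ) htr hβ hγ n).fun_const_smul c
    simp only [aeval_monomial, derivative_monomial, ← Algebra.smul_def, mul_smul_comm,
      smul_mul_assoc, map_smul]
    rwa [mul_smul, Nat.cast_smul_eq_nsmul]

/-- Abstract form of the lemma Str(β ∂_s f(α_s) γ) = Str(β (∂_s α_s) f'(α_s) γ):
for a tracial continuous functional τ on a Banach algebra, a differentiable
curve α with β, γ commuting with α(s₀), the function s ↦ τ(β f(α(s)) γ) is
differentiable at s₀ with derivative τ(β α' f'(α(s₀)) γ). -/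
theorem hasDerivAt_tracial_poly
    {A : Type*} [NormedRing A] [NormedAlgebra ℂ A] [CompleteSpace A]
    (τ : A →L[ℂ] ℂ) (htr : ∀ x y : A, τ (x * y) = τ (y * x))
    (α : ℝ → A) (α' : A) (s₀ : ℝ) (hα : HasDerivAt α α' s₀)
    (β γ : A) (hβ : Commute β (α s₀)) (hγ : Commute γ (α s₀))
    (f : Polynomial ℂ) :
    HasDerivAt (fun s => τ (β * Polynomial.aeval (α s) f * γ))
      (τ (β * α' * Polynomial.aeval (α s₀) (Polynomial.derivative f) * γ)) s₀ :=
  hasDerivAt_tracial_poly_general τ htr α α' s₀ hα β γ hβ hγ f
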